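/- Fix q₀ ∈ U such that K(q₀) is invertible. Then the real directional derivatives of the first component z¹ of z at q₀ along both the radial vector q₀ and the vector i·q₀ (the generator of the Hopf circle action) vanish if and only if both of the following determinants are zero: the determinant of K(q₀) with its first column replaced by h(z(q₀)), and the determinant of K(q₀) with its first column replaced by q₀. -/

import Mathlib

/-!
Differentiating `F(q, z(q)) = 0` in a real direction `v` gives `K · dz(v) = M(z) v̄ − v`.
Along the Hopf orbit, `v = c q₀`, and since `M(z) q̄₀ = q₀ − h(z)` the right-hand side is
`(c̄ − c) q₀ − c̄ h(z)`. Cramer's rule then gives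
`det K · dz¹(c q₀) = (c̄ − c) det K[q₀] − c̄ det K[h]`, where `K[b]` is `K` with first column `b`.
For `c = 1` and `c = i` this is a triangular system in the two determinants with nonzero
diagonal, so both derivatives vanish iff both determinants do.
-/

open Matrix Filter Topology ComplexConjugate

theorem Matrix.det_mul_apply_eq_det_updateCol {n R : Type*} [Fintype n] [DecidableEq n]
    [CommRing R] {A : Matrix n n R} {w b : n → R} (hw : A *ᵥ w = b) (j : n) :
    A.det * w j = (A.updateCol j b).det := by
  rw [← cramer_apply, ← hw, cramer_eq_adjugate_mulVec, mulVec_mulVec, adjugate_mul,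
    smul_mulVec, one_mulVec, Pi.smul_apply, smul_eq_mul]

theorem Matrix.mulVec_eq_of_apply_single {ι R : Type*} [Fintype ι] [DecidableEq ι]
    [CommSemiring R] {A : Matrix ι ι R} {D : ι → (ι → R) →ₗ[R] R}
    (hA : ∀ i j, A i j = D i (Pi.single j 1)) (w : ι → R) :
    A *ᵥ w = fun i => D i w := by
  have : A = LinearMap.toMatrix' (LinearMap.pi D) := by ext i j; simp [hA]
  rw [this, LinearMap.toMatrix'_mulVec]
  rfl

section HopfResidual

variable {ι : Type*} [Fintype ι] (M : (ι → ℂ) → Matrix ι ι ℂ) (h : (ι → ℂ) → ι → ℂ)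

def hopfResidual (q ζ : ι → ℂ) : ι → ℂ := q - M ζ *ᵥ star q - h ζ

theorem hopfResidual_add_smul (q v ζ : ι → ℂ) (t : ℝ) :
    hopfResidual M h (q + t • v) ζ = hopfResidual M h q ζ + t • (v - M ζ *ᵥ star v) := by
  simp only [hopfResidual, star_add, star_smul, star_trivial, mulVec_add, mulVec_smul]
  module

variable {M h}

theorem differentiableAt_hopfResidual_apply {ζ₀ : ι → ℂ} {i : ι}
    (hM : ∀ j, DifferentiableAt ℂ (fun ζ => M ζ i j) ζ₀)
    (hh : DifferentiableAt ℂ (fun ζ => h ζ i) ζ₀) (q : ι → ℂ) :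
    DifferentiableAt ℂ (fun ζ => hopfResidual M h q ζ i) ζ₀ := by
  simp only [hopfResidual, Pi.sub_apply, mulVec, dotProduct]
  fun_prop

theorem fderiv_hopfResidual_apply_fderiv {z : (ι → ℂ) → ι → ℂ} {q₀ : ι → ℂ} {i : ι}
    (hz : DifferentiableAt ℝ z q₀)
    (hM : ∀ j, DifferentiableAt ℂ (fun ζ => M ζ i j) (z q₀))
    (hh : DifferentiableAt ℂ (fun ζ => h ζ i) (z q₀))
    (hzero : ∀ᶠ q in 𝓝 q₀, hopfResidual M h q (z q) i = 0) (v : ι → ℂ) :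
    fderiv ℂ (fun ζ => hopfResidual M h q₀ ζ i) (z q₀) (fderiv ℝ z q₀ v) =
      (M (z q₀) *ᵥ star v - v) i := by
  -- Differentiate `t ↦ F(q₀ + t v, z(q₀ + t v))`, which vanishes near `0`. By
  -- `hopfResidual_add_smul` its explicit dependence on `t` is `t • c t`, with derivative `c 0`.
  have hγ : HasDerivAt (fun t : ℝ => q₀ + t • v) v 0 := by
    simpa only [one_smul] using ((hasDerivAt_id' (0 : ℝ)).smul_const v).const_add q₀
  have hγ0 : q₀ = q₀ + (0 : ℝ) • v := by simp
  have hzγ : HasDerivAt (fun t : ℝ => z (q₀ + t • v)) (fderiv ℝ z q₀ v) 0 :=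
    hz.hasFDerivAt.comp_hasDerivAt_of_eq 0 hγ hγ0
  have hD : HasDerivAt (fun t : ℝ => hopfResidual M h q₀ (z (q₀ + t • v)) i)
      (fderiv ℂ (fun ζ => hopfResidual M h q₀ ζ i) (z q₀) (fderiv ℝ z q₀ v)) 0 :=
    ((differentiableAt_hopfResidual_apply hM hh q₀).hasFDerivAt.restrictScalars ℝ
      ).comp_hasDerivAt_of_eq 0 hzγ (by rw [← hγ0])
  set c : ℝ → ℂ := fun t => (v - M (z (q₀ + t • v)) *ᵥ star v) i
  have hc : DifferentiableAt ℝ c 0 := by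
    have hMγ : ∀ j, DifferentiableAt ℝ (fun t : ℝ => M (z (q₀ + t • v)) i j) 0 := fun j =>
      (((hM j).hasFDerivAt.restrictScalars ℝ).comp_hasDerivAt_of_eq 0 hzγ
        (by rw [← hγ0])).differentiableAt
    simp only [c, Pi.sub_apply, mulVec, dotProduct]
    apply DifferentiableAt.sub (differentiableAt_const _)
    apply DifferentiableAt.fun_sum
    intro j _
    exact (hMγ j).mul_const _
  have htc : HasDerivAt (fun t : ℝ => t • c t) (c 0) 0 := by
    have := (hasDerivAt_id' (0 : ℝ)).smul hc.hasDerivAt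
    rwa [zero_smul, one_smul, zero_add] at this
  have hzero_line : (fun t : ℝ => hopfResidual M h q₀ (z (q₀ + t • v)) i + t • c t) =ᶠ[𝓝 0]
      fun _ => 0 := by
    have := hγ.continuousAt.tendsto
    rw [← hγ0] at this
    filter_upwards [this.eventually hzero] with t ht
    rw [← ht, hopfResidual_add_smul]; rfl
  have := (hD.add htc).unique ((hasDerivAt_const (0 : ℝ) (0 : ℂ)).congr_of_eventuallyEq hzero_line)
  simp only [c, ← hγ0, Pi.sub_apply] at this ⊢
  linear_combination this

theorem mulVec_fderiv_eq_of_hopfResidual [DecidableEq ι] {K : Matrix ι ι ℂ}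
    {z : (ι → ℂ) → ι → ℂ} {q₀ : ι → ℂ}
    (hK : ∀ i j, K i j = fderiv ℂ (fun ζ => hopfResidual M h q₀ ζ i) (z q₀) (Pi.single j 1))
    (hz : DifferentiableAt ℝ z q₀)
    (hM : ∀ i j, DifferentiableAt ℂ (fun ζ => M ζ i j) (z q₀))
    (hh : ∀ i, DifferentiableAt ℂ (fun ζ => h ζ i) (z q₀))
    (hzero : ∀ᶠ q in 𝓝 q₀, hopfResidual M h q (z q) = 0) (v : ι → ℂ) :
    K *ᵥ fderiv ℝ z q₀ v = M (z q₀) *ᵥ star v - v := by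
  rw [mulVec_eq_of_apply_single (D := fun i => _) hK]
  ext i
  exact fderiv_hopfResidual_apply_fderiv hz (hM i) (hh i)
    (hzero.mono fun q hq => congrFun hq i) v

theorem det_mul_apply_smul_eq [DecidableEq ι] {K : Matrix ι ι ℂ} {q₀ ζ₀ : ι → ℂ}
    {w : (ι → ℂ) → ι → ℂ} (hw : ∀ v, K *ᵥ w v = M ζ₀ *ᵥ star v - v)
    (hres : hopfResidual M h q₀ ζ₀ = 0) (c : ℂ) (j : ι) :
    K.det * w (c • q₀) j =
      (conj c - c) * (K.updateCol j q₀).det - conj c * (K.updateCol j (h ζ₀)).det := by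
  have hMq₀ : M ζ₀ *ᵥ star q₀ = q₀ - h ζ₀ := by
    rw [hopfResidual] at hres
    linear_combination (norm := module) -hres
  have hKw : K *ᵥ w (c • q₀) = (conj c - c) • q₀ + (-conj c) • h ζ₀ := by
    rw [hw, star_smul, mulVec_smul, hMq₀, Complex.star_def]
    module
  rw [det_mul_apply_eq_det_updateCol hKw, det_updateCol_add, det_updateCol_smul,
    det_updateCol_smul]
  ring

end HopfResidual

theorem hopf_reduction_iff_det_vanishes
    /- Invariance of `z¹` along the radial direction `q₀` and the Hopf
       direction `i·q₀` is equivalent to the vanishing of both determinants: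
       `det K(q₀)` with first column `h(z(q₀))`, and with first column `q₀`. -/
    (m : ℕ) (hm : 2 ≤ m)
    (V : Set (Fin m → ℂ)) (hV : IsOpen V)
    (M : (Fin m → ℂ) → Matrix (Fin m) (Fin m) ℂ)
    (hM : ∀ i j, DifferentiableOn ℂ (fun ζ => M ζ i j) V)
    (h : (Fin m → ℂ) → (Fin m → ℂ))
    (hh : ∀ i, DifferentiableOn ℂ (fun ζ => h ζ i) V)
    (F : (Fin m → ℂ) → (Fin m → ℂ) → (Fin m → ℂ))
    (hF : ∀ q ζ, F q ζ =
      fun i => q i - (∑ j, M ζ i j * (starRingEnd ℂ) (q j)) - h ζ i)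
    (U : Set (Fin m → ℂ)) (hU : IsOpen U)
    (z : (Fin m → ℂ) → (Fin m → ℂ))
    (hzV : ∀ q ∈ U, z q ∈ V)
    (hzF : ∀ q ∈ U, F q (z q) = 0)
    (hzdiff : DifferentiableOn ℝ z U)
    (K : (Fin m → ℂ) → Matrix (Fin m) (Fin m) ℂ)
    (hK : ∀ q ∈ U, ∀ i j, K q i j =
      fderiv ℂ (fun ζ => F q ζ i) (z q) (Pi.single j 1))
    (q₀ : Fin m → ℂ) (hq₀ : q₀ ∈ U)
    (hKinv : IsUnit (K q₀).det) :
    (fderiv ℝ (fun q => z q (⟨0, by omega⟩ : Fin m)) q₀ q₀ = 0 ∧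
     fderiv ℝ (fun q => z q (⟨0, by omega⟩ : Fin m)) q₀ (Complex.I • q₀) = 0) ↔
      ((Matrix.updateCol (K q₀) (⟨0, by omega⟩ : Fin m) (h (z q₀))).det = 0 ∧
       (Matrix.updateCol (K q₀) (⟨0, by omega⟩ : Fin m) q₀).det = 0) := by
  classical
  obtain rfl : F = hopfResidual M h := by
    ext q ζ i
    simp [hF, hopfResidual, mulVec, dotProduct]
  set e : Fin m := ⟨0, by omega⟩
  have hzV₀ : V ∈ 𝓝 (z q₀) := hV.mem_nhds (hzV q₀ hq₀)
  have hz : DifferentiableAt ℝ z q₀ := hzdiff.differentiableAt (hU.mem_nhds hq₀)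
  have hzero : ∀ᶠ q in 𝓝 q₀, hopfResidual M h q (z q) = 0 :=
    eventually_of_mem (hU.mem_nhds hq₀) hzF
  have hlin := mulVec_fderiv_eq_of_hopfResidual (hK q₀ hq₀) hz
    (fun i j => (hM i j).differentiableAt hzV₀) (fun i => (hh i).differentiableAt hzV₀) hzero
  have hdet (c : ℂ) := det_mul_apply_smul_eq hlin hzero.self_of_nhds c e
  have hcoord (v : Fin m → ℂ) : fderiv ℝ (fun q => z q e) q₀ v = fderiv ℝ z q₀ v e := by
    rw [((hasFDerivAt_pi'.1 hz.hasFDerivAt) e).fderiv]; rfl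
  have hradial := hdet 1
  have hhopf := hdet Complex.I
  simp only [map_one, sub_self, zero_mul, zero_sub, one_smul, one_mul, Complex.conj_I]
    at hradial hhopf
  rw [hcoord, hcoord, ← mul_right_inj' hKinv.ne_zero, mul_zero, hradial,
    ← mul_right_inj' hKinv.ne_zero (b := fderiv ℝ z q₀ _ e), mul_zero, hhopf]
  constructor
  · rintro ⟨hA, hB⟩
    rw [neg_eq_zero] at hA
    rw [hA, mul_zero, sub_zero, mul_eq_zero] at hB
    exact ⟨hA, hB.resolve_left (by norm_num [Complex.ext_iff])⟩
  · rintro ⟨hA, hB⟩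
    simp [hA, hB]
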